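/- arXiv:2205.06838 — 3 statements merged into one kernel-verified Lean document; each statement's English description precedes it below -/
import Mathlib

section
/- With the setup of the previous context, if additionally there exists j ∈ J with a_j = b_j, then ‖x + ∑_{n∈J} a_n e_n‖ ≤ k_{m−1}^c ‖x + ∑_{n∈J} b_n e_n‖, where k_{m−1}^c = sup{‖I − P_A‖ : |A| ≤ m−1}. -/
/-!
Write `y = x + ∑_{n ∈ J} b n • e n` and `a n = λ n * b n` with `λ n ∈ [0, 1]`; the sign
condition is what makes `λ n ≥ 0`. For `j` with `a j = b j`, the vector `x + ∑ a n • e n` lies in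
the box spanned by `y - P_A y = y - ∑_{n ∈ A} b n • e n` for `A ⊆ J \ {j}`. The norm is convex, so
it is bounded on that box by its values at these vertices, and each of them is at most
`k_{m-1}^c ‖y‖` because `|A| ≤ m - 1`.
-/

open Finset

theorem norm_sub_sum_smul_le_of_forall_subset {V ι : Type*} [SeminormedAddCommGroup V]
    [NormedSpace ℝ V] [DecidableEq ι] (v : ι → V) (t : ι → ℝ) (C : ℝ) (J : Finset ι)
    (ht : ∀ n ∈ J, t n ∈ Set.Icc (0 : ℝ) 1) (y : V)
    (hy : ∀ A ⊆ J, ‖y - ∑ n ∈ A, v n‖ ≤ C) :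
    ‖y - ∑ n ∈ J, t n • v n‖ ≤ C := by
  induction J using Finset.induction generalizing y with
  | empty => simpa using hy ∅ subset_rfl
  | @insert c J hc ih =>
    obtain ⟨htc₀, htc₁⟩ := ht c (mem_insert_self c J)
    have ht' : ∀ n ∈ J, t n ∈ Set.Icc (0 : ℝ) 1 := fun n hn => ht n (mem_insert_of_mem hn)
    have h₀ := ih ht' y fun A hA => hy A (hA.trans (subset_insert c J))
    have h₁ := ih ht' (y - v c) fun A hA => by
      have hcA : c ∉ A := fun h => hc (hA h)
      simpa [sum_insert hcA, sub_sub] using hy (insert c A) (insert_subset_insert c hA)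
    have hsplit : y - ∑ n ∈ insert c J, t n • v n
        = (1 - t c) • (y - ∑ n ∈ J, t n • v n) + t c • (y - v c - ∑ n ∈ J, t n • v n) := by
      rw [sum_insert hc]; module
    calc ‖y - ∑ n ∈ insert c J, t n • v n‖
        ≤ (1 - t c) * ‖y - ∑ n ∈ J, t n • v n‖ + t c * ‖y - v c - ∑ n ∈ J, t n • v n‖ := by
          rw [hsplit]
          refine (norm_add_le _ _).trans_eq ?_
          rw [norm_smul_of_nonneg (by linarith), norm_smul_of_nonneg htc₀]
      _ ≤ (1 - t c) * C + t c * C := by gcongr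
      _ = C := by ring

theorem div_mem_Icc_of_abs_le {a b : ℝ} (hab : |a| ≤ |b|)
    (hsgn : a * b ≠ 0 → Real.sign a = Real.sign b) : a / b ∈ Set.Icc (0 : ℝ) 1 := by
  refine ⟨?_, (le_abs_self _).trans ?_⟩
  · rcases eq_or_ne a 0 with rfl | ha
    · simp
    rcases eq_or_ne b 0 with rfl | hb
    · simp
    rw [← mul_div_mul_left a b (Real.sign_eq_zero_iff.not.mpr hb), ← hsgn (mul_ne_zero ha hb)]
    exact div_nonneg (Real.sign_mul_nonneg a) (hsgn (mul_ne_zero ha hb) ▸ Real.sign_mul_nonneg b)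
  · rw [abs_div]
    exact div_le_one_of_le₀ hab (abs_nonneg b)

theorem div_mul_cancel_of_abs_le {a b : ℝ} (hab : |a| ≤ |b|) : a / b * b = a := by
  rcases eq_or_ne b 0 with rfl | hb
  · rw [abs_zero, abs_nonpos_iff] at hab
    simp [hab]
  · exact div_mul_cancel₀ a hb

theorem apply_add_sum_smul_of_biorthogonal {X ι : Type*} [AddCommGroup X] [Module ℝ X]
    [DecidableEq ι] (e : ι → X) (f : ι → X →ₗ[ℝ] ℝ)
    (hbi : ∀ i j, f i (e j) = if i = j then (1 : ℝ) else 0) {J : Finset ι} (b : ι → ℝ)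
    {x : X} {i : ι} (hi : i ∈ J) (hx : f i x = 0) :
    f i (x + ∑ n ∈ J, b n • e n) = b i := by
  simp [hx, hbi, hi]

theorem stmt_1_general
    {X : Type*} [NormedAddCommGroup X] [NormedSpace ℝ X]
    (e : ℕ → X) (f : ℕ → X →L[ℝ] ℝ)
    (hbi : ∀ i j, f i (e j) = if i = j then (1 : ℝ) else 0)
    (m : ℕ) (kc : ℝ)
    (hkc : ∀ A : Finset ℕ, A.card ≤ m - 1 → ∀ x : X,
      ‖x - ∑ n ∈ A, f n x • e n‖ ≤ kc * ‖x‖)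
    (J : Finset ℕ) (hJ : J.card ≤ m)
    (a b : ℕ → ℝ)
    (hab : ∀ n ∈ J, |a n| ≤ |b n|)
    (hsgn : ∀ n ∈ J, a n * b n ≠ 0 → Real.sign (a n) = Real.sign (b n))
    (hfix : ∃ j ∈ J, a j = b j)
    (x : X) (hx : ∀ n ∈ J, f n x = 0) :
    ‖x + ∑ n ∈ J, a n • e n‖ ≤ kc * ‖x + ∑ n ∈ J, b n • e n‖ := by
  obtain ⟨j, hj, habj⟩ := hfix
  set y := x + ∑ n ∈ J, b n • e n
  have hvertex : ∀ A ⊆ J.erase j, ‖y - ∑ n ∈ A, b n • e n‖ ≤ kc * ‖y‖ := fun A hA => by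
    have hcard : A.card ≤ m - 1 :=
      (card_le_card hA).trans (card_erase_of_mem hj ▸ Nat.sub_le_sub_right hJ 1)
    have hPA : ∑ n ∈ A, f n y • e n = ∑ n ∈ A, b n • e n := sum_congr rfl fun n hn =>
      have hnJ := mem_of_mem_erase (hA hn)
      congrArg (· • e n) (apply_add_sum_smul_of_biorthogonal e (fun i => (f i : X →ₗ[ℝ] ℝ))
        hbi b hnJ (hx n hnJ))
    exact hPA ▸ hkc A hcard y
  have hbox : x + ∑ n ∈ J, a n • e n
      = y - ∑ n ∈ J.erase j, (1 - a n / b n) • (b n • e n) := by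
    have ha : ∑ n ∈ J.erase j, a n • e n = ∑ n ∈ J.erase j, (a n / b n) • (b n • e n) :=
      sum_congr rfl fun n hn => by
        rw [smul_smul, div_mul_cancel_of_abs_le (hab n (mem_of_mem_erase hn))]
    simp only [y, sub_smul, one_smul, sum_sub_distrib, ← ha, ← add_sum_erase J _ hj, habj]
    abel
  rw [hbox]
  exact norm_sub_sum_smul_le_of_forall_subset _ _ _ _ (fun n hn => by
    have hn' := mem_of_mem_erase hn
    obtain ⟨h₀, h₁⟩ := div_mem_Icc_of_abs_le (hab n hn') (hsgn n hn')
    exact ⟨by linarith, by linarith⟩) y hvertex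

/-- Proposition 2.1 (second part): if some coefficient is unchanged, the
constant improves to `k_{m-1}^c`. -/
theorem stmt_1
    {X : Type*} [NormedAddCommGroup X] [NormedSpace ℝ X] [CompleteSpace X]
    (e : ℕ → X) (f : ℕ → X →L[ℝ] ℝ)
    (hbi : ∀ i j, f i (e j) = if i = j then (1 : ℝ) else 0)
    (htotal : ∀ x : X, (∀ n, f n x = 0) → x = 0)
    (hdense : Dense (Submodule.span ℝ (Set.range e) : Set X))
    (m : ℕ) (kc : ℝ)
    (hkc : ∀ A : Finset ℕ, A.card ≤ m - 1 → ∀ x : X,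
      ‖x - ∑ n ∈ A, f n x • e n‖ ≤ kc * ‖x‖)
    (J : Finset ℕ) (hJ : J.card ≤ m)
    (a b : ℕ → ℝ)
    (hab : ∀ n ∈ J, |a n| ≤ |b n|)
    (hsgn : ∀ n ∈ J, a n * b n ≠ 0 → Real.sign (a n) = Real.sign (b n))
    (hfix : ∃ j ∈ J, a j = b j)
    (x : X) (hx : ∀ n ∈ J, f n x = 0) :
    ‖x + ∑ n ∈ J, a n • e n‖ ≤ kc * ‖x + ∑ n ∈ J, b n • e n‖ :=
  stmt_1_general e f hbi m kc hkc J hJ a b hab hsgn hfix x hx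
end

section
/- Let X be a Banach space with Markushevich basis and τ ∈ (0,1]. Let L̃_{m,τ} be the smallest constant such that ‖x − P_Λ(x)‖ ≤ L̃_{m,τ} σ̃_m(x) for all x ∈ X and all τ-weak greedy sets Λ of x with |Λ| = m, where σ̃_m(x) = inf{‖x − P_A(x)‖ : |A| = m}. Then ν_{m,τ}/τ ≤ L̃_{m,τ} ≤ g_{m−1,τ}^c · ν_{m,τ}/τ. -/
/-!
Lower bound `ν_{m,τ} ≤ τ L̃_{m,τ}`: given `x`, `A`, `B`, `ε`, `δ` as in `ν_{m,τ}` with `x`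
vanishing on a set `C` of `m - |A|` further indices, put `z = τ (x + 1_{εA}) + 1_{δB} + 1_C`.
Then `A ∪ C` is `τ`-weak greedy for `z`, `z - P_{A∪C} z = τ x + 1_{δB}` and
`z - P_{B∪C} z = τ (x + 1_{εA})`. In general `x` is replaced by `x - P_C x`, which is arbitrarily
close to `x` for a suitable `C`, by density of the span and the uniform bound
`|e_n^*(x)| ‖e_n‖ ≤ ν (1 + g) ‖x‖`.

Upper bound `L̃_{m,τ} ≤ g ν / τ`: let `Γ = Λ \ A`, `y = x - P_A x`, `w = y - P_Γ y` and
`β = min_Γ |e_n^*(x)|`. Then `x - P_Λ x = w + P_{A \ Λ} x`, whose coefficients are at most `β / τ`,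
so by convexity it suffices to bound `‖τ w + 1_{δ(A \ Λ)}‖` for `|δ| = β`. The constant `ν`
compares this with `‖w + β 1_{εΓ}‖`, `ε = sign y`, and Abel summation writes `w + β 1_{εΓ}` as a
convex combination of the `y - P_G y` over the initial segments `G ⊊ Γ` of the decreasing
rearrangement of `y` on `Γ`; these `G` are `τ`-weak greedy for `y` and smaller than `m`, so each
term has norm at most `g ‖y‖`.
-/

open Finset

section Definitions

variable {X ι : Type*} [NormedAddCommGroup X] [NormedSpace ℝ X]

def IsBiorthogonal [DecidableEq ι] (e : ι → X) (f : ι → X →L[ℝ] ℝ) : Prop :=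
  ∀ i j, f i (e j) = if i = j then 1 else 0

def coordProj (e : ι → X) (f : ι → X →L[ℝ] ℝ) (A : Finset ι) (x : X) : X :=
  ∑ n ∈ A, f n x • e n

def IsWeakGreedySet (f : ι → X →L[ℝ] ℝ) (τ : ℝ) (x : X) (Λ : Finset ι) : Prop :=
  ∀ i ∈ Λ, ∀ j ∉ Λ, τ * |f j x| ≤ |f i x|

/-- `g^c_{k,τ} ≤ g`. -/
def IsWeakGreedyComplementBound (e : ι → X) (f : ι → X →L[ℝ] ℝ) (τ : ℝ) (k : ℕ) (g : ℝ) :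
    Prop :=
  ∀ (x : X) (Λ : Finset ι), Λ.card ≤ k → IsWeakGreedySet f τ x Λ →
    ‖x - coordProj e f Λ x‖ ≤ g * ‖x‖

/-- `ν_{m,τ} ≤ ν`. -/
def IsSymmetryBound (e : ι → X) (f : ι → X →L[ℝ] ℝ) (τ : ℝ) (m : ℕ) (ν : ℝ) : Prop :=
  ∀ (x : X), (∀ n, |f n x| ≤ 1 / τ) →
    ∀ (A B : Finset ι), A.card = B.card → B.card ≤ m →
    (∀ n ∈ A, f n x = 0) → (∀ n ∈ B, f n x = 0) → Disjoint A B →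
    ∀ ε δ : ι → ℝ, (∀ n ∈ A, |ε n| = 1) → (∀ n ∈ B, |δ n| = 1) →
    ‖τ • x + ∑ n ∈ B, δ n • e n‖ ≤ ν * ‖x + ∑ n ∈ A, ε n • e n‖

/-- `L̃_{m,τ} ≤ L`. -/
def IsWeakLebesgueBound (e : ι → X) (f : ι → X →L[ℝ] ℝ) (τ : ℝ) (m : ℕ) (L : ℝ) : Prop :=
  ∀ (x : X) (Λ : Finset ι), Λ.card = m → IsWeakGreedySet f τ x Λ →
    ∀ A : Finset ι, A.card = m →
    ‖x - coordProj e f Λ x‖ ≤ L * ‖x - coordProj e f A x‖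

end Definitions

section

variable {X ι : Type*} [NormedAddCommGroup X] [NormedSpace ℝ X] {e : ι → X}
  {f : ι → X →L[ℝ] ℝ} {τ : ℝ} {m : ℕ}

theorem norm_coordProj_le (A : Finset ι) (x : X) :
    ‖coordProj e f A x‖ ≤ ∑ n ∈ A, |f n x| * ‖e n‖ :=
  (norm_sum_le _ _).trans_eq (by simp only [norm_smul, Real.norm_eq_abs])

theorem norm_add_smul_le_of_mem_Icc {a b : X} {s u t R : ℝ} (hs : ‖a + s • b‖ ≤ R)
    (hu : ‖a + u • b‖ ≤ R) (ht : t ∈ Set.Icc s u) : ‖a + t • b‖ ≤ R := by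
  have hline : ⇑(AffineMap.lineMap a (a + b) : ℝ →ᵃ[ℝ] X) = fun t => a + t • b := by
    funext t
    simp [AffineMap.lineMap_apply, add_comm]
  have hconv := (convex_closedBall (0 : X) R).affine_preimage (AffineMap.lineMap a (a + b))
  rw [hline] at hconv
  simpa using hconv.ordConnected.out (by simpa using hs) (by simpa using hu) ht

theorem IsWeakGreedySet.apply_eq_zero (hτ : 0 < τ) {x : X} {Λ : Finset ι}
    (hΛ : IsWeakGreedySet f τ x Λ) {i j : ι} (hi : i ∈ Λ) (hi0 : f i x = 0) (hj : j ∉ Λ) :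
    f j x = 0 := by
  have h := hΛ i hi j hj
  rw [hi0, abs_zero] at h
  exact abs_eq_zero.mp (le_antisymm (nonpos_of_mul_nonpos_right h hτ) (abs_nonneg _))

theorem IsWeakGreedyComplementBound.abs_apply_mul_norm_le {k : ℕ} {g : ℝ}
    (hg : IsWeakGreedyComplementBound e f τ k g) (hk : 1 ≤ k) (hτ1 : τ ≤ 1) {u : X} {j : ι}
    (hj : ∀ i, |f i u| ≤ |f j u|) : |f j u| * ‖e j‖ ≤ (1 + g) * ‖u‖ := by
  have h := hg u {j} (by simpa) fun i hi l _ => by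
    rw [mem_singleton.mp hi]
    exact (mul_le_of_le_one_left (abs_nonneg _) hτ1).trans (hj l)
  simp only [coordProj, sum_singleton] at h
  calc |f j u| * ‖e j‖ = ‖u - (u - f j u • e j)‖ := by
        rw [sub_sub_cancel, norm_smul, Real.norm_eq_abs]
    _ ≤ ‖u‖ + ‖u - f j u • e j‖ := norm_sub_le _ _
    _ ≤ (1 + g) * ‖u‖ := by linarith

theorem IsSymmetryBound.norm_le_mul_norm {ν : ℝ} (hν : IsSymmetryBound e f τ m ν)
    (hτ : 0 < τ) (hm : 1 ≤ m) {a b : ι} (hab : a ≠ b) : ‖e b‖ ≤ ν * ‖e a‖ := by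
  simpa using hν 0 (fun n => by rw [map_zero, abs_zero]; positivity) {a} {b} rfl (by simpa)
    (by simp) (by simp) (by simpa) 1 1 (by simp) (by simp)

theorem IsSymmetryBound.norm_smul_add_le {ν : ℝ} (hν : IsSymmetryBound e f τ m ν) {α : ℝ}
    (hα : 0 < α) {x : X} (hx : ∀ n, |f n x| ≤ α / τ) {A B : Finset ι} (hAB : A.card = B.card)
    (hBm : B.card ≤ m) (hxA : ∀ n ∈ A, f n x = 0) (hxB : ∀ n ∈ B, f n x = 0)
    (hdisj : Disjoint A B) {ε δ : ι → ℝ} (hε : ∀ n ∈ A, |ε n| = α) (hδ : ∀ n ∈ B, |δ n| = α) :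
    ‖τ • x + ∑ n ∈ B, δ n • e n‖ ≤ ν * ‖x + ∑ n ∈ A, ε n • e n‖ := by
  have hscale : ∀ (y : X) (S : Finset ι) (c : ι → ℝ),
      ‖y + ∑ n ∈ S, c n • e n‖ = α * ‖α⁻¹ • y + ∑ n ∈ S, (α⁻¹ * c n) • e n‖ := by
    intro y S c
    have hy : y + ∑ n ∈ S, c n • e n = α • (α⁻¹ • y + ∑ n ∈ S, (α⁻¹ * c n) • e n) := by
      simp only [smul_add, smul_sum, smul_smul, ← mul_assoc, mul_inv_cancel₀ hα.ne', one_mul,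
        one_smul]
    rw [hy, norm_smul, Real.norm_eq_abs, abs_of_pos hα]
  have h := hν (α⁻¹ • x) (fun n => by
      rw [map_smul, smul_eq_mul, abs_mul, abs_inv, abs_of_pos hα, inv_mul_le_iff₀ hα, mul_one_div]
      exact hx n)
    A B hAB hBm (fun n hn => by simp [hxA n hn]) (fun n hn => by simp [hxB n hn]) hdisj
    (fun n => α⁻¹ * ε n) (fun n => α⁻¹ * δ n)
    (fun n hn => by rw [abs_mul, hε n hn, abs_inv, abs_of_pos hα, inv_mul_cancel₀ hα.ne'])
    (fun n hn => by rw [abs_mul, hδ n hn, abs_inv, abs_of_pos hα, inv_mul_cancel₀ hα.ne'])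
  rw [hscale (τ • x) B δ, hscale x A ε, smul_comm α⁻¹ τ x, mul_left_comm]
  exact mul_le_mul_of_nonneg_left h hα.le

variable [DecidableEq ι]

namespace IsBiorthogonal

theorem apply_sum_smul (hbi : IsBiorthogonal e f) (a : ι → ℝ) (S : Finset ι) (j : ι) :
    f j (∑ n ∈ S, a n • e n) = if j ∈ S then a j else 0 := by
  simp only [map_sum, map_smul, hbi j, smul_eq_mul, mul_ite, mul_one, mul_zero]
  rw [sum_ite_eq]

theorem apply_add_sum_smul (hbi : IsBiorthogonal e f) (u : X) (a : ι → ℝ) (S : Finset ι)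
    (j : ι) : f j (u + ∑ n ∈ S, a n • e n) = f j u + if j ∈ S then a j else 0 := by
  rw [map_add, hbi.apply_sum_smul]

theorem apply_sub_coordProj (hbi : IsBiorthogonal e f) (A : Finset ι) (x : X) (j : ι) :
    f j (x - coordProj e f A x) = if j ∈ A then 0 else f j x := by
  rw [map_sub, coordProj, hbi.apply_sum_smul]
  split_ifs <;> ring

theorem add_sum_smul_sub_coordProj (hbi : IsBiorthogonal e f) {u : X} {S : Finset ι}
    (hu : ∀ n ∈ S, f n u = 0) (a : ι → ℝ) :
    u + ∑ n ∈ S, a n • e n - coordProj e f S (u + ∑ n ∈ S, a n • e n) = u := by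
  rw [add_sub_assoc, add_eq_left, sub_eq_zero]
  exact sum_congr rfl fun n hn => by rw [hbi.apply_add_sum_smul, hu n hn, if_pos hn, zero_add]

theorem ne_zero (hbi : IsBiorthogonal e f) (i : ι) : e i ≠ 0 := by
  intro h
  simpa [h] using hbi i i

theorem exists_finset_apply_eq_zero_of_mem_span (hbi : IsBiorthogonal e f) {u : X}
    (hu : u ∈ Submodule.span ℝ (Set.range e)) : ∃ S : Finset ι, ∀ n ∉ S, f n u = 0 := by
  obtain ⟨c, rfl⟩ := Finsupp.mem_span_range_iff_exists_finsupp.mp hu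
  exact ⟨c.support, fun n hn => by rw [Finsupp.sum, hbi.apply_sum_smul, if_neg hn]⟩

end IsBiorthogonal

theorem IsWeakGreedyComplementBound.one_le [Nonempty ι] {k : ℕ} {g : ℝ}
    (hg : IsWeakGreedyComplementBound e f τ k g) (hbi : IsBiorthogonal e f) : 1 ≤ g := by
  obtain ⟨i⟩ := ‹Nonempty ι›
  have h := hg (e i) ∅ (by simp) (by simp [IsWeakGreedySet])
  simp only [coordProj, sum_empty, sub_zero] at h
  exact le_of_mul_le_mul_right (by simpa using h) (norm_pos_iff.mpr (hbi.ne_zero i))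

theorem IsSymmetryBound.one_le [Nontrivial ι] {ν : ℝ} (hν : IsSymmetryBound e f τ m ν)
    (hbi : IsBiorthogonal e f) (hτ : 0 < τ) (hm : 1 ≤ m) : 1 ≤ ν := by
  obtain ⟨a, b, hab⟩ := exists_pair_ne ι
  have ha := norm_pos_iff.mpr (hbi.ne_zero a)
  have hb := norm_pos_iff.mpr (hbi.ne_zero b)
  have hba := hν.norm_le_mul_norm hτ hm hab
  have hab := hν.norm_le_mul_norm hτ hm hab.symm
  nlinarith

section ConvexCombinations

theorem norm_add_sum_smul_le_of_abs_le (v : ι → X) (B : Finset ι) (w : X) {a : ι → ℝ}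
    {α R : ℝ} (ha : ∀ n ∈ B, |a n| ≤ α)
    (h : ∀ δ : ι → ℝ, (∀ n ∈ B, |δ n| = α) → ‖w + ∑ n ∈ B, δ n • v n‖ ≤ R) :
    ‖w + ∑ n ∈ B, a n • v n‖ ≤ R := by
  induction B using Finset.induction_on generalizing w with
  | empty => simpa using h 0 (by simp)
  | insert n₀ s hn₀ ih =>
    have hα : 0 ≤ α := (abs_nonneg _).trans (ha n₀ (mem_insert_self _ _))
    have hcorner : ∀ c, |c| = α → ‖(w + ∑ n ∈ s, a n • v n) + c • v n₀‖ ≤ R := by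
      intro c hc
      rw [add_right_comm]
      refine ih _ (fun n hn => ha n (mem_insert_of_mem hn)) fun δ hδ => ?_
      have hδ' : ∀ n ∈ insert n₀ s, |Function.update δ n₀ c n| = α := by
        intro n hn
        rcases mem_insert.mp hn with rfl | hn
        · simpa
        · rw [Function.update_of_ne (ne_of_mem_of_not_mem hn hn₀)]
          exact hδ n hn
      have hs : ∑ n ∈ s, Function.update δ n₀ c n • v n = ∑ n ∈ s, δ n • v n :=
        sum_congr rfl fun n hn => by rw [Function.update_of_ne (ne_of_mem_of_not_mem hn hn₀)]
      simpa [sum_insert hn₀, hs, add_assoc] using h _ hδ'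
    rw [sum_insert hn₀, ← add_assoc, add_right_comm]
    exact norm_add_smul_le_of_mem_Icc (hcorner (-α) (by simpa)) (hcorner α (abs_of_nonneg hα))
      (abs_le.mp (ha n₀ (mem_insert_self _ _)))

theorem sub_coordProj_add_smul_sum_sign_erase {v : X} {Γ : Finset ι} {n₀ : ι} (hn₀ : n₀ ∈ Γ) :
    v - coordProj e f Γ v + |f n₀ v| • ∑ n ∈ Γ, (SignType.sign (f n v) : ℝ) • e n
      = v - coordProj e f (Γ.erase n₀) v
        + |f n₀ v| • ∑ n ∈ Γ.erase n₀, (SignType.sign (f n v) : ℝ) • e n := by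
  rw [coordProj, coordProj, ← add_sum_erase Γ _ hn₀, ← add_sum_erase Γ _ hn₀, smul_add,
    smul_smul, abs_mul_sign]
  abel

theorem forall_mem_sdiff_le_of_erase {c : ι → ℝ} {Γ G : Finset ι} {n₀ : ι}
    (hmin : ∀ n ∈ Γ, c n₀ ≤ c n) (hG : G ⊆ Γ.erase n₀)
    (h : ∀ i ∈ G, ∀ j ∈ Γ.erase n₀ \ G, c j ≤ c i) : ∀ i ∈ G, ∀ j ∈ Γ \ G, c j ≤ c i := by
  intro i hi j hj
  by_cases hjn : j = n₀
  · exact hjn ▸ hmin i (mem_of_mem_erase (hG hi))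
  · exact h i hi j (mem_sdiff.mpr ⟨mem_erase.mpr ⟨hjn, (mem_sdiff.mp hj).1⟩, (mem_sdiff.mp hj).2⟩)

/-- Abel summation: the left-hand side is affine in `β`, and when `β` is the least modulus on `Γ`
the corresponding coordinate drops out, which allows induction on `Γ`. -/
theorem norm_sub_coordProj_add_smul_sum_sign_le {v : X} {R : ℝ} (Γ : Finset ι)
    (hR : ∀ G ⊆ Γ, (∀ i ∈ G, ∀ j ∈ Γ \ G, |f j v| ≤ |f i v|) → ‖v - coordProj e f G v‖ ≤ R)
    {β : ℝ} (hβ0 : 0 ≤ β) (hβ : ∀ n ∈ Γ, β ≤ |f n v|) :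
    ‖v - coordProj e f Γ v + β • ∑ n ∈ Γ, (SignType.sign (f n v) : ℝ) • e n‖ ≤ R := by
  induction Γ using Finset.strongInduction generalizing β with
  | H Γ ih =>
    rcases Γ.eq_empty_or_nonempty with rfl | hΓ
    · simpa [coordProj] using hR ∅ subset_rfl (by simp)
    obtain ⟨n₀, hn₀, hmin⟩ := Γ.exists_min_image (fun n => |f n v|) hΓ
    have hbot : ‖v - coordProj e f Γ v + (0 : ℝ) • ∑ n ∈ Γ, (SignType.sign (f n v) : ℝ) • e n‖
        ≤ R := by
      simpa using hR Γ subset_rfl (by simp)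
    have htop : ‖v - coordProj e f Γ v
        + |f n₀ v| • ∑ n ∈ Γ, (SignType.sign (f n v) : ℝ) • e n‖ ≤ R := by
      rw [sub_coordProj_add_smul_sum_sign_erase hn₀]
      exact ih _ (erase_ssubset hn₀) (fun G hG hinit => hR G (hG.trans (erase_subset _ _))
        (forall_mem_sdiff_le_of_erase hmin hG hinit)) (abs_nonneg _)
        fun n hn => hmin n (mem_of_mem_erase hn)
    exact norm_add_smul_le_of_mem_Icc hbot htop ⟨hβ0, hβ n₀ hn₀⟩

end ConvexCombinations

section UpperBound

namespace IsBiorthogonal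

theorem sub_coordProj_eq_sub_coordProj_sdiff_add (hbi : IsBiorthogonal e f) (x : X)
    (Λ A : Finset ι) :
    x - coordProj e f Λ x = x - coordProj e f A x - coordProj e f (Λ \ A) (x - coordProj e f A x)
      + ∑ n ∈ A \ Λ, f n x • e n := by
  have hP : coordProj e f (Λ \ A) (x - coordProj e f A x) = coordProj e f (Λ \ A) x :=
    sum_congr rfl fun n hn => by rw [hbi.apply_sub_coordProj, if_neg (mem_sdiff.mp hn).2]
  rw [hP, coordProj, coordProj, coordProj, ← sum_inter_add_sum_sdiff Λ A,
    ← sum_inter_add_sum_sdiff A Λ, inter_comm]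
  abel

theorem isWeakGreedySet_sub_coordProj (hbi : IsBiorthogonal e f) (hτ1 : τ ≤ 1) {x : X}
    {Λ A G : Finset ι} (hΛ : IsWeakGreedySet f τ x Λ) (hG : G ⊆ Λ \ A)
    (hinit : ∀ i ∈ G, ∀ j ∈ (Λ \ A) \ G,
      |f j (x - coordProj e f A x)| ≤ |f i (x - coordProj e f A x)|) :
    IsWeakGreedySet f τ (x - coordProj e f A x) G := by
  intro i hi j hj
  obtain ⟨hiΛ, hiA⟩ := mem_sdiff.mp (hG hi)
  by_cases hjA : j ∈ A
  · rw [hbi.apply_sub_coordProj, if_pos hjA, abs_zero, mul_zero]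
    exact abs_nonneg _
  by_cases hjΛ : j ∈ Λ
  · exact (mul_le_of_le_one_left (abs_nonneg _) hτ1).trans
      (hinit i hi j (mem_sdiff.mpr ⟨mem_sdiff.mpr ⟨hjΛ, hjA⟩, hj⟩))
  · rw [hbi.apply_sub_coordProj, hbi.apply_sub_coordProj, if_neg hiA, if_neg hjA]
    exact hΛ i hiΛ j hjΛ

theorem norm_sub_coordProj_sdiff_add_smul_sum_sign_le (hbi : IsBiorthogonal e f) (hτ1 : τ ≤ 1)
    {g : ℝ} (hg : IsWeakGreedyComplementBound e f τ (m - 1) g) {x : X} {Λ A : Finset ι}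
    (hΛm : Λ.card = m) (hΛ : IsWeakGreedySet f τ x Λ) {i₀ : ι} (hi₀ : i₀ ∈ Λ \ A)
    (hmin : ∀ n ∈ Λ \ A, |f i₀ (x - coordProj e f A x)| ≤ |f n (x - coordProj e f A x)|) :
    ‖x - coordProj e f A x - coordProj e f (Λ \ A) (x - coordProj e f A x)
      + |f i₀ (x - coordProj e f A x)|
        • ∑ n ∈ Λ \ A, (SignType.sign (f n (x - coordProj e f A x)) : ℝ) • e n‖
      ≤ g * ‖x - coordProj e f A x‖ := by
  rw [sub_coordProj_add_smul_sum_sign_erase hi₀]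
  refine norm_sub_coordProj_add_smul_sum_sign_le _ (fun G hG hinit => hg _ G ?_ ?_)
    (abs_nonneg _) fun n hn => hmin n (mem_of_mem_erase hn)
  · have := card_le_card (hG.trans (erase_subset_erase i₀ (sdiff_subset (t := A))))
    rwa [card_erase_of_mem (mem_sdiff.mp hi₀).1, hΛm] at this
  · exact hbi.isWeakGreedySet_sub_coordProj hτ1 hΛ (hG.trans (erase_subset _ _))
      (forall_mem_sdiff_le_of_erase hmin hG hinit)

theorem norm_smul_sub_coordProj_add_sum_le (hbi : IsBiorthogonal e f) (hτ : 0 < τ)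
    (hτ1 : τ ≤ 1) {g ν : ℝ} (hg : IsWeakGreedyComplementBound e f τ (m - 1) g)
    (hν : IsSymmetryBound e f τ m ν) (hν0 : 0 ≤ ν) {x : X} {Λ A : Finset ι}
    (hΛm : Λ.card = m) (hΛ : IsWeakGreedySet f τ x Λ) (hAm : A.card = m)
    (hnz : ∀ i ∈ Λ, f i x ≠ 0) {i₀ : ι} (hi₀ : i₀ ∈ Λ \ A)
    (hmin : ∀ n ∈ Λ \ A, |f i₀ (x - coordProj e f A x)| ≤ |f n (x - coordProj e f A x)|)
    {δ : ι → ℝ} (hδ : ∀ n ∈ A \ Λ, |δ n| = |f i₀ x|) :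
    ‖τ • (x - coordProj e f A x - coordProj e f (Λ \ A) (x - coordProj e f A x))
        + ∑ n ∈ A \ Λ, δ n • e n‖ ≤ ν * (g * ‖x - coordProj e f A x‖) := by
  set y := x - coordProj e f A x
  have hyx : ∀ n ∉ A, f n y = f n x := fun n hn => by rw [hbi.apply_sub_coordProj, if_neg hn]
  set β := |f i₀ y|
  have hβx : β = |f i₀ x| := congrArg abs (hyx i₀ (mem_sdiff.mp hi₀).2)
  have hβ : 0 < β := hβx ▸ abs_pos.mpr (hnz i₀ (mem_sdiff.mp hi₀).1)
  set w := y - coordProj e f (Λ \ A) y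
  have habel : ‖w + ∑ n ∈ Λ \ A, (β * SignType.sign (f n y)) • e n‖ ≤ g * ‖y‖ := by
    simpa only [smul_sum, smul_smul] using
      hbi.norm_sub_coordProj_sdiff_add_smul_sum_sign_le hτ1 hg hΛm hΛ hi₀ hmin
  have hfw : ∀ n, f n w = if n ∈ Λ ∪ A then 0 else f n x := fun n => by
    by_cases hnA : n ∈ A <;> by_cases hnΛ : n ∈ Λ <;>
      simp [w, y, hbi.apply_sub_coordProj, hnA, hnΛ]
  refine (hν.norm_smul_add_le hβ (fun n => ?_) (card_sdiff_comm (hΛm.trans hAm.symm))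
    ((card_le_card sdiff_subset).trans hAm.le) (fun n hn => ?_) (fun n hn => ?_)
    disjoint_sdiff_sdiff (fun n hn => ?_) (hβx ▸ hδ)).trans
    (mul_le_mul_of_nonneg_left habel hν0)
  · rw [hfw]
    split_ifs with hn
    · rw [abs_zero]; positivity
    · rw [le_div_iff₀ hτ, mul_comm, hβx]
      exact hΛ i₀ (mem_sdiff.mp hi₀).1 n fun h => hn (mem_union_left _ h)
  · rw [hfw, if_pos (mem_union_left _ (mem_sdiff.mp hn).1)]
  · rw [hfw, if_pos (mem_union_right _ (mem_sdiff.mp hn).1)]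
  · have hne : f n y ≠ 0 := (hyx n (mem_sdiff.mp hn).2).symm ▸ hnz n (mem_sdiff.mp hn).1
    rcases hne.lt_or_gt with h | h <;> simp [h, abs_of_pos hβ]

theorem norm_sub_coordProj_le_of_sdiff_nonempty (hbi : IsBiorthogonal e f) (hτ : 0 < τ)
    (hτ1 : τ ≤ 1) {g ν : ℝ} (hg : IsWeakGreedyComplementBound e f τ (m - 1) g)
    (hν : IsSymmetryBound e f τ m ν) (hν0 : 0 ≤ ν) {x : X} {Λ A : Finset ι}
    (hΛm : Λ.card = m) (hΛ : IsWeakGreedySet f τ x Λ) (hAm : A.card = m)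
    (hnz : ∀ i ∈ Λ, f i x ≠ 0) (hΓ : (Λ \ A).Nonempty) :
    ‖x - coordProj e f Λ x‖ ≤ g * ν / τ * ‖x - coordProj e f A x‖ := by
  obtain ⟨i₀, hi₀, hmin⟩ :=
    (Λ \ A).exists_min_image (fun n => |f n (x - coordProj e f A x)|) hΓ
  have h := norm_add_sum_smul_le_of_abs_le e (A \ Λ) _ (a := fun n => τ * f n x) (fun n hn => ?_)
    fun δ hδ => hbi.norm_smul_sub_coordProj_add_sum_le hτ hτ1 hg hν hν0 hΛm hΛ hAm hnz hi₀ hmin hδ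
  · simp only [← smul_smul, ← smul_sum, ← smul_add] at h
    rw [← hbi.sub_coordProj_eq_sub_coordProj_sdiff_add, norm_smul, Real.norm_eq_abs,
      abs_of_pos hτ] at h
    rw [div_mul_eq_mul_div, le_div_iff₀ hτ]
    linarith
  · rw [abs_mul, abs_of_pos hτ]
    exact hΛ i₀ (mem_sdiff.mp hi₀).1 n (mem_sdiff.mp hn).2

theorem isWeakLebesgueBound_of_isSymmetryBound [Nontrivial ι] (hbi : IsBiorthogonal e f)
    (htotal : ∀ x : X, (∀ n, f n x = 0) → x = 0) (hτ : 0 < τ) (hτ1 : τ ≤ 1) (hm : 1 ≤ m)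
    {g ν : ℝ} (hg : IsWeakGreedyComplementBound e f τ (m - 1) g)
    (hν : IsSymmetryBound e f τ m ν) : IsWeakLebesgueBound e f τ m (g * ν / τ) := by
  have hg1 := hg.one_le hbi
  have hν1 := hν.one_le hbi hτ hm
  have hconst : 1 ≤ g * ν / τ := by
    rw [le_div_iff₀ hτ]
    nlinarith
  intro x Λ hΛm hΛ A hAm
  by_cases hz : ∃ i ∈ Λ, f i x = 0
  · obtain ⟨i, hi, hi0⟩ := hz
    have hx : x - coordProj e f Λ x = 0 := htotal _ fun n => by
      rw [hbi.apply_sub_coordProj]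
      split_ifs with hn
      · rfl
      · exact hΛ.apply_eq_zero hτ hi hi0 hn
    rw [hx, norm_zero]
    positivity
  push Not at hz
  rcases (Λ \ A).eq_empty_or_nonempty with hΓ | hΓ
  · rw [eq_of_subset_of_card_le (sdiff_eq_empty_iff_subset.mp hΓ) (hAm.trans hΛm.symm).le]
    exact le_mul_of_one_le_left (norm_nonneg _) hconst
  · exact hbi.norm_sub_coordProj_le_of_sdiff_nonempty hτ hτ1 hg hν (by linarith) hΛm hΛ hAm
      hz hΓ

end IsBiorthogonal

end UpperBound

section LowerBound

theorem sum_union_ite_mem {M : Type*} [AddCommMonoid M] {A C : Finset ι} (h : Disjoint A C)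
    (p q : ι → M) :
    ∑ n ∈ A ∪ C, (if n ∈ A then p n else q n) = ∑ n ∈ A, p n + ∑ n ∈ C, q n := by
  rw [sum_union h, sum_ite_of_true fun _ hn => hn,
    sum_ite_of_false fun _ hn => disjoint_right.mp h hn]

namespace IsBiorthogonal

theorem isWeakGreedySet_add_sum_smul (hbi : IsBiorthogonal e f) (hτ : 0 ≤ τ) {u : X}
    {S : Finset ι} {a : ι → ℝ} (hu : ∀ n ∈ S, f n u = 0) (hout : ∀ j ∉ S, |f j u| ≤ 1)
    (hin : ∀ i ∈ S, τ ≤ |a i|) : IsWeakGreedySet f τ (u + ∑ n ∈ S, a n • e n) S := by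
  intro i hi j hj
  rw [hbi.apply_add_sum_smul, hbi.apply_add_sum_smul, if_pos hi, if_neg hj, hu i hi, zero_add,
    add_zero]
  exact (mul_le_of_le_one_right hτ (hout j hj)).trans (hin i hi)

theorem norm_le_of_add_sum_smul_eq (hbi : IsBiorthogonal e f) {L : ℝ}
    (hL : IsWeakLebesgueBound e f τ m L) {u v : X} {S T : Finset ι} {a b : ι → ℝ}
    (hu : ∀ n ∈ S, f n u = 0) (hv : ∀ n ∈ T, f n v = 0) (hS : S.card = m) (hT : T.card = m)
    (hgreedy : IsWeakGreedySet f τ (u + ∑ n ∈ S, a n • e n) S)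
    (heq : u + ∑ n ∈ S, a n • e n = v + ∑ n ∈ T, b n • e n) : ‖u‖ ≤ L * ‖v‖ := by
  have h := hL _ S hS hgreedy T hT
  rwa [hbi.add_sum_smul_sub_coordProj hu, heq, hbi.add_sum_smul_sub_coordProj hv] at h

theorem norm_smul_add_sum_le_of_vanishing (hbi : IsBiorthogonal e f) {L : ℝ}
    (hL : IsWeakLebesgueBound e f τ m L) (hτ : 0 < τ) (hτ1 : τ ≤ 1) {x : X}
    (hx : ∀ n, |f n x| ≤ 1 / τ) {A B C : Finset ι} (hxA : ∀ n ∈ A, f n x = 0)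
    (hxB : ∀ n ∈ B, f n x = 0) (hxC : ∀ n ∈ C, f n x = 0) (hAB : Disjoint A B)
    (hAC : Disjoint A C) (hBC : Disjoint B C) (hAm : A.card + C.card = m)
    (hBm : B.card + C.card = m) {ε δ : ι → ℝ} (hε : ∀ n ∈ A, |ε n| = 1)
    (hδ : ∀ n ∈ B, |δ n| = 1) :
    ‖τ • x + ∑ n ∈ B, δ n • e n‖ ≤ τ * L * ‖x + ∑ n ∈ A, ε n • e n‖ := by
  set u := τ • x + ∑ n ∈ B, δ n • e n
  set v := τ • (x + ∑ n ∈ A, ε n • e n)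
  set a : ι → ℝ := fun n => if n ∈ A then τ * ε n else 1
  set b : ι → ℝ := fun n => if n ∈ B then δ n else 1
  have hfu : ∀ n, f n u = τ * f n x + if n ∈ B then δ n else 0 := fun n => by
    rw [hbi.apply_add_sum_smul, map_smul, smul_eq_mul]
  have hfv : ∀ n, f n v = τ * (f n x + if n ∈ A then ε n else 0) := fun n => by
    rw [map_smul, hbi.apply_add_sum_smul, smul_eq_mul]
  have hu0 : ∀ n ∈ A ∪ C, f n u = 0 := by
    intro n hn
    rw [hfu]
    rcases mem_union.mp hn with hn | hn
    · rw [hxA n hn, if_neg (disjoint_left.mp hAB hn)]; ring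
    · rw [hxC n hn, if_neg (disjoint_right.mp hBC hn)]; ring
  have hv0 : ∀ n ∈ B ∪ C, f n v = 0 := by
    intro n hn
    rw [hfv]
    rcases mem_union.mp hn with hn | hn
    · rw [hxB n hn, if_neg (disjoint_right.mp hAB hn)]; ring
    · rw [hxC n hn, if_neg (disjoint_right.mp hAC hn)]; ring
  have hgreedy : IsWeakGreedySet f τ (u + ∑ n ∈ A ∪ C, a n • e n) (A ∪ C) := by
    refine hbi.isWeakGreedySet_add_sum_smul hτ.le hu0 (fun j hj => ?_) fun i hi => ?_
    · rw [hfu]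
      by_cases hjB : j ∈ B
      · rw [hxB j hjB, mul_zero, zero_add, if_pos hjB, hδ j hjB]
      · rw [if_neg hjB, add_zero, abs_mul, abs_of_pos hτ, ← le_div_iff₀' hτ]
        exact hx j
    · rcases mem_union.mp hi with hiA | hiC
      · simp [a, hiA, abs_mul, abs_of_pos hτ, hε i hiA]
      · simpa [a, disjoint_right.mp hAC hiC] using hτ1
  have h := hbi.norm_le_of_add_sum_smul_eq hL hu0 hv0 (b := b)
    (by rw [card_union_of_disjoint hAC, hAm]) (by rw [card_union_of_disjoint hBC, hBm]) hgreedy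
    (by
      simp only [u, v, a, b, ite_smul, sum_union_ite_mem hAC, sum_union_ite_mem hBC, smul_add,
        smul_sum, smul_smul, one_smul]
      abel)
  rw [norm_smul, Real.norm_eq_abs, abs_of_pos hτ] at h
  linarith

end IsBiorthogonal

theorem IsWeakLebesgueBound.one_le [Infinite ι] {L : ℝ} (hL : IsWeakLebesgueBound e f τ m L)
    (hbi : IsBiorthogonal e f) (hτ : 0 < τ) (hτ1 : τ ≤ 1) : 1 ≤ L := by
  obtain ⟨C, hC⟩ := Finset.exists_card_eq (α := ι) m
  obtain ⟨j, hj⟩ := Infinite.exists_notMem_finset C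
  have h := hbi.norm_smul_add_sum_le_of_vanishing hL hτ hτ1 (x := e j) (A := ∅) (B := ∅)
    (C := C) (fun n => ?_) (by simp) (by simp) (fun n hn => ?_) (by simp) (by simp) (by simp)
    (by simp [hC]) (by simp [hC]) (ε := 0) (δ := 0) (by simp) (by simp)
  · simp only [sum_empty, add_zero, norm_smul, Real.norm_eq_abs, abs_of_pos hτ] at h
    rw [mul_right_comm] at h
    exact le_of_mul_le_mul_left (by simpa using h) (mul_pos hτ (norm_pos_iff.mpr (hbi.ne_zero j)))
  · rw [hbi n j]
    split_ifs
    · simpa using one_le_one_div hτ hτ1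
    · simpa using hτ.le
  · rw [hbi n j, if_neg (ne_of_mem_of_not_mem hn hj)]

namespace IsBiorthogonal

theorem abs_apply_mul_norm_le (hbi : IsBiorthogonal e f)
    (hdense : Dense (Submodule.span ℝ (Set.range e) : Set X)) {k : ℕ} {g ν : ℝ}
    (hg : IsWeakGreedyComplementBound e f τ k g) (hk : 1 ≤ k) (hτ1 : τ ≤ 1)
    (he : ∀ a b, a ≠ b → ‖e b‖ ≤ ν * ‖e a‖) (hν1 : 1 ≤ ν) (n : ι) (x : X) :
    |f n x| * ‖e n‖ ≤ ν * (1 + g) * ‖x‖ := by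
  refine hdense.induction (P := fun x => |f n x| * ‖e n‖ ≤ ν * (1 + g) * ‖x‖) (fun u hu => ?_)
    (isClosed_le (by fun_prop) (by fun_prop)) x
  obtain ⟨S, hS⟩ := hbi.exists_finset_apply_eq_zero_of_mem_span hu
  obtain ⟨j, -, hj⟩ := (insert n S).exists_max_image (fun i => |f i u|) (insert_nonempty n S)
  have hjmax : ∀ i, |f i u| ≤ |f j u| := fun i => by
    by_cases hi : i ∈ insert n S
    · exact hj i hi
    · rw [hS i fun h => hi (mem_insert_of_mem h), abs_zero]
      exact abs_nonneg _
  have hej : ‖e n‖ ≤ ν * ‖e j‖ := by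
    rcases eq_or_ne j n with rfl | hjn
    · exact le_mul_of_one_le_left (norm_nonneg _) hν1
    · exact he j n hjn
  calc |f n u| * ‖e n‖ ≤ |f j u| * (ν * ‖e j‖) :=
        mul_le_mul (hjmax n) hej (norm_nonneg _) (abs_nonneg _)
    _ = ν * (|f j u| * ‖e j‖) := by ring
    _ ≤ ν * ((1 + g) * ‖u‖) :=
        mul_le_mul_of_nonneg_left (hg.abs_apply_mul_norm_le hk hτ1 hjmax) (by linarith)
    _ = ν * (1 + g) * ‖u‖ := by ring

theorem exists_card_eq_disjoint_norm_coordProj_le [Infinite ι] (hbi : IsBiorthogonal e f)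
    (hdense : Dense (Submodule.span ℝ (Set.range e) : Set X)) {K : ℝ}
    (hK : ∀ n x, |f n x| * ‖e n‖ ≤ K * ‖x‖) (x : X) (S : Finset ι) (t : ℕ) {η : ℝ}
    (hη : 0 < η) : ∃ C : Finset ι, C.card = t ∧ Disjoint C S ∧ ‖coordProj e f C x‖ ≤ η := by
  have hD : 0 < t * |K| + 1 := by positivity
  obtain ⟨y, hy, hxy⟩ := Metric.mem_closure_iff.mp (hdense x) (η / (t * |K| + 1)) (by positivity)
  rw [dist_eq_norm] at hxy
  obtain ⟨T, hT⟩ := hbi.exists_finset_apply_eq_zero_of_mem_span hy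
  obtain ⟨C, hCsub, hC⟩ := (S ∪ T).finite_toSet.infinite_compl.exists_subset_card_eq t
  obtain ⟨hCS, hCT⟩ := disjoint_union_right.mp
    (disjoint_coe.mp (Set.subset_compl_iff_disjoint_right.mp hCsub))
  refine ⟨C, hC, hCS, ?_⟩
  calc ‖coordProj e f C x‖ ≤ ∑ n ∈ C, |f n x| * ‖e n‖ := norm_coordProj_le C x
    _ ≤ ∑ n ∈ C, |K| * (η / (t * |K| + 1)) := sum_le_sum fun n hn => by
        rw [← sub_zero (f n x), ← hT n (disjoint_left.mp hCT hn), ← map_sub]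
        exact (hK n _).trans (mul_le_mul (le_abs_self K) hxy.le (norm_nonneg _) (abs_nonneg _))
    _ = t * |K| / (t * |K| + 1) * η := by
        rw [sum_const, hC, nsmul_eq_mul]
        ring
    _ ≤ η := mul_le_of_le_one_left hη.le ((div_le_one hD).mpr (by linarith))

theorem norm_smul_add_sum_le_of_abs_apply_mul_norm_le [Infinite ι] (hbi : IsBiorthogonal e f)
    (hdense : Dense (Submodule.span ℝ (Set.range e) : Set X)) {K : ℝ}
    (hK : ∀ n x, |f n x| * ‖e n‖ ≤ K * ‖x‖) {L : ℝ} (hL : IsWeakLebesgueBound e f τ m L)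
    (hL0 : 0 ≤ L) (hτ : 0 < τ) (hτ1 : τ ≤ 1) {x : X} (hx : ∀ n, |f n x| ≤ 1 / τ)
    {A B : Finset ι} (hAB : A.card = B.card) (hBm : B.card ≤ m) (hxA : ∀ n ∈ A, f n x = 0)
    (hxB : ∀ n ∈ B, f n x = 0) (hdisj : Disjoint A B) {ε δ : ι → ℝ}
    (hε : ∀ n ∈ A, |ε n| = 1) (hδ : ∀ n ∈ B, |δ n| = 1) :
    ‖τ • x + ∑ n ∈ B, δ n • e n‖ ≤ τ * L * ‖x + ∑ n ∈ A, ε n • e n‖ := by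
  refine le_of_forall_pos_le_add fun η hη => ?_
  obtain ⟨C, hC, hCAB, hPC⟩ := hbi.exists_card_eq_disjoint_norm_coordProj_le hdense hK x
    (A ∪ B) (m - B.card) (η := η / (τ * (L + 1))) (by positivity)
  obtain ⟨hCA, hCB⟩ := disjoint_union_right.mp hCAB
  set x' := x - coordProj e f C x
  have hfx' : ∀ n, f n x' = if n ∈ C then 0 else f n x := hbi.apply_sub_coordProj C x
  have hkey := hbi.norm_smul_add_sum_le_of_vanishing hL hτ hτ1 (x := x') (C := C)
    (fun n => by
      rw [hfx']
      split_ifs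
      · rw [abs_zero]; positivity
      · exact hx n)
    (fun n hn => by rw [hfx', if_neg (disjoint_right.mp hCA hn), hxA n hn])
    (fun n hn => by rw [hfx', if_neg (disjoint_right.mp hCB hn), hxB n hn])
    (fun n hn => by rw [hfx', if_pos hn]) hdisj hCA.symm hCB.symm (by omega) (by omega) hε hδ
  calc ‖τ • x + ∑ n ∈ B, δ n • e n‖
      = ‖(τ • x' + ∑ n ∈ B, δ n • e n) + τ • coordProj e f C x‖ := by
        rw [smul_sub]; abel_nf
    _ ≤ τ * L * ‖x' + ∑ n ∈ A, ε n • e n‖ + τ * ‖coordProj e f C x‖ := by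
        refine (norm_add_le _ _).trans (add_le_add hkey ?_)
        rw [norm_smul, Real.norm_eq_abs, abs_of_pos hτ]
    _ ≤ τ * L * (‖x + ∑ n ∈ A, ε n • e n‖ + ‖coordProj e f C x‖)
          + τ * ‖coordProj e f C x‖ := by
        gcongr
        exact (norm_sub_le _ _).trans_eq' (by rw [sub_add_eq_add_sub])
    _ = τ * L * ‖x + ∑ n ∈ A, ε n • e n‖ + τ * (L + 1) * ‖coordProj e f C x‖ := by ring
    _ ≤ τ * L * ‖x + ∑ n ∈ A, ε n • e n‖ + η := by
        gcongr
        rwa [← le_div_iff₀' (by positivity)]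

theorem isSymmetryBound_of_isWeakLebesgueBound [Infinite ι] (hbi : IsBiorthogonal e f)
    (hdense : Dense (Submodule.span ℝ (Set.range e) : Set X)) (hτ : 0 < τ) (hτ1 : τ ≤ 1)
    {g ν L : ℝ} (hg : IsWeakGreedyComplementBound e f τ (m - 1) g)
    (hν : IsSymmetryBound e f τ m ν) (hL : IsWeakLebesgueBound e f τ m L) :
    IsSymmetryBound e f τ m (τ * L) := by
  have hL1 := hL.one_le hbi hτ hτ1
  intro x hx A B hAB hBm hxA hxB hdisj ε δ hε hδ
  rcases (hAB.trans_le hBm).lt_or_eq with hAm | hAm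
  · rcases A.eq_empty_or_nonempty with rfl | hA
    · obtain rfl : B = ∅ := card_eq_zero.mp hAB.symm
      simp only [sum_empty, add_zero, norm_smul, Real.norm_eq_abs, abs_of_pos hτ, mul_assoc]
      exact mul_le_mul_of_nonneg_left (le_mul_of_one_le_left (norm_nonneg _) hL1) hτ.le
    · -- Here `m ≥ 2`, so singletons are admissible for `g`, which then bounds all coefficients.
      have hm : 1 ≤ m - 1 := by have := hA.card_pos; omega
      have hK := hbi.abs_apply_mul_norm_le hdense hg hm hτ1
        (fun a b hab => hν.norm_le_mul_norm hτ (by omega) hab) (hν.one_le hbi hτ (by omega))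
      exact hbi.norm_smul_add_sum_le_of_abs_apply_mul_norm_le hdense hK hL (by linarith) hτ hτ1
        hx hAB hBm hxA hxB hdisj hε hδ
  · exact hbi.norm_smul_add_sum_le_of_vanishing hL hτ hτ1 hx hxA hxB (C := ∅) (by simp) hdisj
      (by simp) (by simp) (by simp [hAm]) (by simp [← hAB, hAm]) hε hδ

end IsBiorthogonal

end LowerBound

end

theorem stmt_6_general
    {X : Type*} [NormedAddCommGroup X] [NormedSpace ℝ X]
    (e : ℕ → X) (f : ℕ → X →L[ℝ] ℝ)
    (hbi : ∀ i j, f i (e j) = if i = j then (1 : ℝ) else 0)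
    (htotal : ∀ x : X, (∀ n, f n x = 0) → x = 0)
    (hdense : Dense (Submodule.span ℝ (Set.range e) : Set X))
    (τ : ℝ) (hτ : 0 < τ) (hτ1 : τ ≤ 1) (m : ℕ) (hm : 1 ≤ m)
    (g ν L : ℝ)
    (hg : ∀ (x : X) (Λ : Finset ℕ), Λ.card ≤ m - 1 →
      (∀ i ∈ Λ, ∀ j ∉ Λ, τ * |f j x| ≤ |f i x|) →
      ‖x - ∑ n ∈ Λ, f n x • e n‖ ≤ g * ‖x‖)
    (hν : ∀ (x : X), (∀ n, |f n x| ≤ 1 / τ) →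
      ∀ (A B : Finset ℕ), A.card = B.card → B.card ≤ m →
      (∀ n ∈ A, f n x = 0) → (∀ n ∈ B, f n x = 0) → Disjoint A B →
      ∀ ε δ : ℕ → ℝ, (∀ n ∈ A, |ε n| = 1) → (∀ n ∈ B, |δ n| = 1) →
      ‖τ • x + ∑ n ∈ B, δ n • e n‖ ≤ ν * ‖x + ∑ n ∈ A, ε n • e n‖)
    (hL : ∀ (x : X) (Λ : Finset ℕ), Λ.card = m →
      (∀ i ∈ Λ, ∀ j ∉ Λ, τ * |f j x| ≤ |f i x|) →
      ∀ A : Finset ℕ, A.card = m →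
      ‖x - ∑ n ∈ Λ, f n x • e n‖ ≤ L * ‖x - ∑ n ∈ A, f n x • e n‖) :
    ((∀ (x : X), (∀ n, |f n x| ≤ 1 / τ) →
      ∀ (A B : Finset ℕ), A.card = B.card → B.card ≤ m →
      (∀ n ∈ A, f n x = 0) → (∀ n ∈ B, f n x = 0) → Disjoint A B →
      ∀ ε δ : ℕ → ℝ, (∀ n ∈ A, |ε n| = 1) → (∀ n ∈ B, |δ n| = 1) →
      ‖τ • x + ∑ n ∈ B, δ n • e n‖ ≤ (τ * L) * ‖x + ∑ n ∈ A, ε n • e n‖)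
    ∧
    (∀ (x : X) (Λ : Finset ℕ), Λ.card = m →
      (∀ i ∈ Λ, ∀ j ∉ Λ, τ * |f j x| ≤ |f i x|) →
      ∀ A : Finset ℕ, A.card = m →
      ‖x - ∑ n ∈ Λ, f n x • e n‖
        ≤ (g * ν / τ) * ‖x - ∑ n ∈ A, f n x • e n‖)) :=
  ⟨IsBiorthogonal.isSymmetryBound_of_isWeakLebesgueBound hbi hdense hτ hτ1 hg hν hL,
    IsBiorthogonal.isWeakLebesgueBound_of_isSymmetryBound hbi htotal hτ hτ1 hm hg hν⟩

/-- Theorem 1.2: `ν_{m,τ}/τ ≤ L̃_{m,τ} ≤ g_{m-1,τ}^c · ν_{m,τ}/τ`.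
The lower bound is expressed by the fact that `τ·L̃` dominates every
ratio in the definition of `ν_{m,τ}`, and the upper bound by the fact
that `g·ν/τ` verifies the defining inequality of `L̃_{m,τ}`. -/
theorem stmt_6
    {X : Type*} [NormedAddCommGroup X] [NormedSpace ℝ X] [CompleteSpace X]
    (e : ℕ → X) (f : ℕ → X →L[ℝ] ℝ)
    (hbi : ∀ i j, f i (e j) = if i = j then (1 : ℝ) else 0)
    (htotal : ∀ x : X, (∀ n, f n x = 0) → x = 0)
    (hdense : Dense (Submodule.span ℝ (Set.range e) : Set X))
    (τ : ℝ) (hτ : 0 < τ) (hτ1 : τ ≤ 1) (m : ℕ) (hm : 1 ≤ m)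
    (g ν L : ℝ)
    (hg : ∀ (x : X) (Λ : Finset ℕ), Λ.card ≤ m - 1 →
      (∀ i ∈ Λ, ∀ j ∉ Λ, τ * |f j x| ≤ |f i x|) →
      ‖x - ∑ n ∈ Λ, f n x • e n‖ ≤ g * ‖x‖)
    (hν : ∀ (x : X), (∀ n, |f n x| ≤ 1 / τ) →
      ∀ (A B : Finset ℕ), A.card = B.card → B.card ≤ m →
      (∀ n ∈ A, f n x = 0) → (∀ n ∈ B, f n x = 0) → Disjoint A B →
      ∀ ε δ : ℕ → ℝ, (∀ n ∈ A, |ε n| = 1) → (∀ n ∈ B, |δ n| = 1) →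
      ‖τ • x + ∑ n ∈ B, δ n • e n‖ ≤ ν * ‖x + ∑ n ∈ A, ε n • e n‖)
    (hL : ∀ (x : X) (Λ : Finset ℕ), Λ.card = m →
      (∀ i ∈ Λ, ∀ j ∉ Λ, τ * |f j x| ≤ |f i x|) →
      ∀ A : Finset ℕ, A.card = m →
      ‖x - ∑ n ∈ Λ, f n x • e n‖ ≤ L * ‖x - ∑ n ∈ A, f n x • e n‖) :
    ((∀ (x : X), (∀ n, |f n x| ≤ 1 / τ) →
      ∀ (A B : Finset ℕ), A.card = B.card → B.card ≤ m →
      (∀ n ∈ A, f n x = 0) → (∀ n ∈ B, f n x = 0) → Disjoint A B →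
      ∀ ε δ : ℕ → ℝ, (∀ n ∈ A, |ε n| = 1) → (∀ n ∈ B, |δ n| = 1) →
      ‖τ • x + ∑ n ∈ B, δ n • e n‖ ≤ (τ * L) * ‖x + ∑ n ∈ A, ε n • e n‖)
    ∧
    (∀ (x : X) (Λ : Finset ℕ), Λ.card = m →
      (∀ i ∈ Λ, ∀ j ∉ Λ, τ * |f j x| ≤ |f i x|) →
      ∀ A : Finset ℕ, A.card = m →
      ‖x - ∑ n ∈ Λ, f n x • e n‖
        ≤ (g * ν / τ) * ‖x - ∑ n ∈ A, f n x • e n‖)) :=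
  stmt_6_general e f hbi htotal hdense τ hτ hτ1 m hm g ν L hg hν hL
end

section
/- Let X be a Banach space with Markushevich basis. Suppose the basis is K_s-suppression unconditional (‖x − P_A(x)‖ ≤ K_s‖x‖ for all x and all finite A) and has C_b-property (A): ‖y + 1_{δB}‖ ≤ C_b ‖y + 1_{εA}‖ whenever ‖y‖_∞ ≤ 1, |A| = |B| finite, A, B, supp(y) pairwise disjoint, and (ε), (δ) are signs. Then for every τ ∈ (0,1], the basis has C_b·K_s-property (A, τ): ‖τx + 1_{δB}‖ ≤ C_b K_s ‖x + 1_{εA}‖ whenever ‖x‖_∞ ≤ 1/τ, |A| = |B| finite, A, B, supp(x) pairwise disjoint, and (ε), (δ) are signs. -/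
/-!
Write `z = x + 1_{εA}`. Since `supp x` misses `A`, `P_A z = 1_{εA}`, so
`τ x + 1_{εA} = τ z + (1 - τ) P_A z` is a convex combination of `z` and `P_A z`.
Suppression unconditionality together with density of the span of the basis gives
`‖P_A z‖ ≤ K_s ‖z‖`, and `K_s ≥ 1`, so `‖τ x + 1_{εA}‖ ≤ K_s ‖z‖`. Since `‖τ x‖_∞ ≤ 1`,
property (A) applied to `y = τ x` finishes the proof.
-/

section Biorthogonal

variable {X : Type*} [AddCommGroup X] [Module ℝ X] [TopologicalSpace X]
  {e : ℕ → X} {f : ℕ → X →L[ℝ] ℝ}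

theorem coord_sum_smul (hbi : ∀ i j, f i (e j) = if i = j then (1 : ℝ) else 0)
    (A : Finset ℕ) (c : ℕ → ℝ) (n : ℕ) :
    f n (∑ m ∈ A, c m • e m) = if n ∈ A then c n else 0 := by
  simp only [map_sum, map_smul, smul_eq_mul, hbi, mul_ite, mul_one, mul_zero,
    Finset.sum_ite_eq]

theorem ne_zero_of_biorthogonal (hbi : ∀ i j, f i (e j) = if i = j then (1 : ℝ) else 0)
    (n : ℕ) : e n ≠ 0 := by
  intro h
  simpa [h] using hbi n n

theorem exists_sum_coord_eq_of_mem_span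
    (hbi : ∀ i j, f i (e j) = if i = j then (1 : ℝ) else 0)
    {s : X} (hs : s ∈ Submodule.span ℝ (Set.range e)) :
    ∃ F : Finset ℕ, ∀ G, F ⊆ G → ∑ n ∈ G, f n s • e n = s := by
  obtain ⟨c, rfl⟩ := Finsupp.mem_span_range_iff_exists_finsupp.mp hs
  have hcoord : ∀ n, f n (c.sum fun m a => a • e m) = c n := by
    intro n
    rw [Finsupp.sum, coord_sum_smul hbi]
    split_ifs with hn
    · rfl
    · exact (Finsupp.notMem_support_iff.mp hn).symm
  refine ⟨c.support, fun G hG => ?_⟩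
  simp only [hcoord]
  rw [Finsupp.sum]
  refine (Finset.sum_subset hG fun n _ hn => ?_).symm
  rw [Finsupp.notMem_support_iff.mp hn, zero_smul]

end Biorthogonal

theorem norm_sum_coord_le {X : Type*} [SeminormedAddCommGroup X] [NormedSpace ℝ X]
    {e : ℕ → X} {f : ℕ → X →L[ℝ] ℝ} (hbi : ∀ i j, f i (e j) = if i = j then (1 : ℝ) else 0)
    (hdense : Dense (Submodule.span ℝ (Set.range e) : Set X)) {K : ℝ}
    (hK : ∀ (A : Finset ℕ) (x : X), ‖x - ∑ n ∈ A, f n x • e n‖ ≤ K * ‖x‖)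
    (A : Finset ℕ) (z : X) : ‖∑ n ∈ A, f n z • e n‖ ≤ K * ‖z‖ := by
  suffices h : ∀ s, ‖∑ n ∈ A, f n z • e n‖ ≤ K * ‖z‖ + K * ‖z - s‖ by
    simpa using h z
  refine hdense.induction (fun s hs => ?_)
    (isClosed_le continuous_const (by fun_prop))
  obtain ⟨F, hF⟩ := exists_sum_coord_eq_of_mem_span hbi hs
  set D := F \ A
  have hsplit : ∑ n ∈ A, f n z • e n
      = (z - ∑ n ∈ D, f n z • e n) - ((z - s) - ∑ n ∈ A ∪ D, f n (z - s) • e n) := by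
    simp only [map_sub, sub_smul, Finset.sum_sub_distrib,
      hF (A ∪ D) (by simp [D, Finset.subset_iff]; tauto)]
    rw [Finset.sum_union Finset.disjoint_sdiff]
    abel
  calc ‖∑ n ∈ A, f n z • e n‖
      ≤ ‖z - ∑ n ∈ D, f n z • e n‖ + ‖(z - s) - ∑ n ∈ A ∪ D, f n (z - s) • e n‖ := by
        rw [hsplit]; exact norm_sub_le _ _
    _ ≤ K * ‖z‖ + K * ‖z - s‖ := add_le_add (hK D z) (hK (A ∪ D) (z - s))

theorem one_le_of_norm_le_mul_norm {X : Type*} [NormedAddCommGroup X] {x : X} (hx : x ≠ 0)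
    {K : ℝ} (h : ‖x‖ ≤ K * ‖x‖) : 1 ≤ K :=
  le_of_mul_le_mul_right (by simpa using h) (norm_pos_iff.mpr hx)

theorem norm_convex_comb_le {X : Type*} [SeminormedAddCommGroup X] [NormedSpace ℝ X]
    {z p : X} {K τ : ℝ} (hK : 1 ≤ K) (hp : ‖p‖ ≤ K * ‖z‖) (hτ0 : 0 ≤ τ) (hτ1 : τ ≤ 1) :
    ‖τ • z + (1 - τ) • p‖ ≤ K * ‖z‖ :=
  calc ‖τ • z + (1 - τ) • p‖
      ≤ τ * ‖z‖ + (1 - τ) * ‖p‖ := by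
        refine (norm_add_le _ _).trans_eq ?_
        rw [norm_smul, norm_smul, Real.norm_of_nonneg hτ0, Real.norm_of_nonneg (by linarith)]
    _ ≤ τ * (K * ‖z‖) + (1 - τ) * (K * ‖z‖) := by
        gcongr
        exact le_mul_of_one_le_left (norm_nonneg z) hK
    _ = K * ‖z‖ := by ring

theorem stmt_9_general
    {X : Type*} [NormedAddCommGroup X] [NormedSpace ℝ X]
    (e : ℕ → X) (f : ℕ → X →L[ℝ] ℝ)
    (hbi : ∀ i j, f i (e j) = if i = j then (1 : ℝ) else 0)
    (hdense : Dense (Submodule.span ℝ (Set.range e) : Set X))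
    (Ks Cb : ℝ)
    (hKs : ∀ (A : Finset ℕ) (x : X),
      ‖x - ∑ n ∈ A, f n x • e n‖ ≤ Ks * ‖x‖)
    (hCb : ∀ (y : X), (∀ n, |f n y| ≤ 1) →
      ∀ (A B : Finset ℕ), A.card = B.card →
      (∀ n ∈ A, f n y = 0) → (∀ n ∈ B, f n y = 0) → Disjoint A B →
      ∀ ε δ : ℕ → ℝ, (∀ n ∈ A, |ε n| = 1) → (∀ n ∈ B, |δ n| = 1) →
      ‖y + ∑ n ∈ B, δ n • e n‖ ≤ Cb * ‖y + ∑ n ∈ A, ε n • e n‖) :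
    ∀ (τ : ℝ), 0 < τ → τ ≤ 1 →
      ∀ (x : X), (∀ n, |f n x| ≤ 1 / τ) →
      ∀ (A B : Finset ℕ), A.card = B.card →
      (∀ n ∈ A, f n x = 0) → (∀ n ∈ B, f n x = 0) → Disjoint A B →
      ∀ ε δ : ℕ → ℝ, (∀ n ∈ A, |ε n| = 1) → (∀ n ∈ B, |δ n| = 1) →
      ‖τ • x + ∑ n ∈ B, δ n • e n‖
        ≤ (Cb * Ks) * ‖x + ∑ n ∈ A, ε n • e n‖ := by
  intro τ hτ0 hτ1 x hx A B hcard hA hB hAB ε δ hε hδ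
  have he0 := ne_zero_of_biorthogonal hbi 0
  have hKs1 : 1 ≤ Ks := one_le_of_norm_le_mul_norm he0 (by simpa using hKs ∅ (e 0))
  have hCb0 : 0 ≤ Cb := zero_le_one.trans <| one_le_of_norm_le_mul_norm he0 <| by
    simpa using hCb (e 0) (fun n => by rw [hbi]; split_ifs <;> simp) ∅ ∅ rfl
      (by simp) (by simp) (by simp) 1 1 (by simp) (by simp)
  have hτx : ∀ n, |f n (τ • x)| ≤ 1 := fun n => by
    rw [map_smul, smul_eq_mul, abs_mul, abs_of_pos hτ0]
    calc τ * |f n x| ≤ τ * (1 / τ) := by gcongr; exact hx n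
      _ = 1 := by field_simp
  have hPA : ‖∑ n ∈ A, ε n • e n‖ ≤ Ks * ‖x + ∑ n ∈ A, ε n • e n‖ := by
    have hproj : ∑ n ∈ A, f n (x + ∑ m ∈ A, ε m • e m) • e n = ∑ n ∈ A, ε n • e n :=
      Finset.sum_congr rfl fun n hn => by simp [coord_sum_smul hbi, hA n hn, hn]
    simpa only [hproj] using norm_sum_coord_le hbi hdense hKs A (x + ∑ n ∈ A, ε n • e n)
  have hconvex : τ • x + ∑ n ∈ A, ε n • e n
      = τ • (x + ∑ n ∈ A, ε n • e n) + (1 - τ) • ∑ n ∈ A, ε n • e n := by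
    module
  calc ‖τ • x + ∑ n ∈ B, δ n • e n‖
      ≤ Cb * ‖τ • x + ∑ n ∈ A, ε n • e n‖ :=
        hCb (τ • x) hτx A B hcard (fun n hn => by simp [hA n hn])
          (fun n hn => by simp [hB n hn]) hAB ε δ hε hδ
    _ ≤ Cb * (Ks * ‖x + ∑ n ∈ A, ε n • e n‖) := by
        gcongr
        rw [hconvex]
        exact norm_convex_comb_le hKs1 hPA hτ0.le hτ1
    _ = (Cb * Ks) * ‖x + ∑ n ∈ A, ε n • e n‖ := by ring

/-- Proposition 5.3(1): a `K_s`-suppression unconditional basis with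
`C_b`-property (A) has `C_b·K_s`-property (A, τ) for every `τ ∈ (0,1]`. -/
theorem stmt_9
    {X : Type*} [NormedAddCommGroup X] [NormedSpace ℝ X] [CompleteSpace X]
    (e : ℕ → X) (f : ℕ → X →L[ℝ] ℝ)
    (hbi : ∀ i j, f i (e j) = if i = j then (1 : ℝ) else 0)
    (htotal : ∀ x : X, (∀ n, f n x = 0) → x = 0)
    (hdense : Dense (Submodule.span ℝ (Set.range e) : Set X))
    (Ks Cb : ℝ)
    (hKs : ∀ (A : Finset ℕ) (x : X),
      ‖x - ∑ n ∈ A, f n x • e n‖ ≤ Ks * ‖x‖)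
    (hCb : ∀ (y : X), (∀ n, |f n y| ≤ 1) →
      ∀ (A B : Finset ℕ), A.card = B.card →
      (∀ n ∈ A, f n y = 0) → (∀ n ∈ B, f n y = 0) → Disjoint A B →
      ∀ ε δ : ℕ → ℝ, (∀ n ∈ A, |ε n| = 1) → (∀ n ∈ B, |δ n| = 1) →
      ‖y + ∑ n ∈ B, δ n • e n‖ ≤ Cb * ‖y + ∑ n ∈ A, ε n • e n‖) :
    ∀ (τ : ℝ), 0 < τ → τ ≤ 1 →
      ∀ (x : X), (∀ n, |f n x| ≤ 1 / τ) →
      ∀ (A B : Finset ℕ), A.card = B.card →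
      (∀ n ∈ A, f n x = 0) → (∀ n ∈ B, f n x = 0) → Disjoint A B →
      ∀ ε δ : ℕ → ℝ, (∀ n ∈ A, |ε n| = 1) → (∀ n ∈ B, |δ n| = 1) →
      ‖τ • x + ∑ n ∈ B, δ n • e n‖
        ≤ (Cb * Ks) * ‖x + ∑ n ∈ A, ε n • e n‖ :=
  stmt_9_general e f hbi hdense Ks Cb hKs hCb
end
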